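/- Proposition 4.1, Part B: for every finite sequence of update parameters with all thresholds positive, if the trajectory started at (0,N) is at (x_C*, x_P*) after the n update steps, then after the same n steps there is no trajectory started from a state of S whose position (x_C, x_P) satisfies x_P > x_P*, and no trajectory whose position satisfies x_C > x_C* and x_P > −x_C + (x_C* + x_P*). -/

import Mathlib

/-!
Write `b ≼ a` for `b ∉ psiB a.1 a.2`, i.e. `b.2 ≤ a.2` and (`b.1 ≤ a.1` or
`b.1 + b.2 ≤ a.1 + a.2`). With positive thresholds every update keeps `S` invariant, since a
rate vanishes wherever its displacement would leave `S`. Every update is also monotone for `≼`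
on `S`: if exactly one of two comparable states moves, the threshold separates their rates, and
whenever that move would break the comparison the rates are ordered the other way. Every state
of `S` is `≼ (0, N)`, so the comparison persists along the two trajectories.
-/

/-- The RMM state space `S = {(x_C, x_P) : 0 ≤ x_C ≤ M, 0 ≤ x_P, x_C + x_P ≤ N}`. -/
def RMMState (N M : ℕ) : Set (ℤ × ℤ) :=
  {x | 0 ≤ x.1 ∧ x.1 ≤ (M : ℤ) ∧ 0 ≤ x.2 ∧ x.1 + x.2 ≤ (N : ℤ)}

/-- The reaction rates `λ₁, λ₂, λ₃, λ₄` (indexed by `Fin 4`, so reaction `Rᵢ` has index `i-1`). -/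
noncomputable def RMMrate (k₁ k₂ k₃ k₄ : ℝ) (N M : ℕ) (i : Fin 4) (x : ℤ × ℤ) : ℝ :=
  match i with
  | 0 => k₁ * ((N : ℝ) - (x.1 : ℝ) - (x.2 : ℝ)) * ((M : ℝ) - (x.1 : ℝ))
  | 1 => k₂ * (x.1 : ℝ)
  | 2 => k₃ * (x.1 : ℝ)
  | 3 => k₄ * (x.2 : ℝ) * ((M : ℝ) - (x.1 : ℝ))

/-- The reaction displacements `R₁ = (1,0)`, `R₂ = (-1,0)`, `R₃ = (-1,1)`, `R₄ = (1,-1)`. -/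
def RMMdisp : Fin 4 → ℤ × ℤ
  | 0 => (1, 0)
  | 1 => (-1, 0)
  | 2 => (-1, 1)
  | 3 => (1, -1)

/-- The coupled one-step update `U_{i,t}`: move by `Rᵢ` if `λᵢ(x) ≥ t`, stay put otherwise. -/
noncomputable def RMMupdate (k₁ k₂ k₃ k₄ : ℝ) (N M : ℕ) (i : Fin 4) (t : ℝ)
    (x : ℤ × ℤ) : ℤ × ℤ :=
  if RMMrate k₁ k₂ k₃ k₄ N M i x ≥ t then x + RMMdisp i else x

/-- Claim-A exclusion region `ψ_A(c,p)`. -/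
def psiA (c p : ℤ) : Set (ℤ × ℤ) :=
  {x | x.2 < p} ∪ {x | x.1 < c ∧ x.1 + x.2 ≤ c + p}

/-- Claim-B exclusion region `ψ_B(c,p)`. -/
def psiB (c p : ℤ) : Set (ℤ × ℤ) :=
  {x | x.2 > p} ∪ {x | x.1 > c ∧ x.1 + x.2 > c + p}

/-- The coupled flow: composition of the one-step updates along a list of parameters. -/
noncomputable def RMMflow (k₁ k₂ k₃ k₄ : ℝ) (N M : ℕ) (L : List (Fin 4 × ℝ))
    (x : ℤ × ℤ) : ℤ × ℤ :=
  L.foldl (fun y q => RMMupdate k₁ k₂ k₃ k₄ N M q.1 q.2 y) x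

theorem rel_ite_ge_of_le {α : Type*} [Add α] (rel : α → α → Prop) (r : α → ℝ) (d : α) (t : ℝ)
    {a b : α} (hba : rel b a) (hshift : rel (b + d) (a + d))
    (hup : ¬ rel b (a + d) → r a ≤ r b) (hdown : ¬ rel (b + d) a → r b ≤ r a) :
    rel (if r b ≥ t then b + d else b) (if r a ≥ t then a + d else a) := by
  split_ifs with hb ha ha
  · exact hshift
  · by_contra h
    linarith [hdown h]
  · by_contra h
    linarith [hup h]
  · exact hba

theorem add_mem_psiB_add_iff (a b d : ℤ × ℤ) :
    b + d ∈ psiB (a + d).1 (a + d).2 ↔ b ∈ psiB a.1 a.2 := by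
  simp only [psiB, Set.mem_union, Set.mem_ofPred_eq, Prod.fst_add, Prod.snd_add]
  omega

section RMM

variable {k₁ k₂ k₃ k₄ : ℝ} {N M : ℕ}

theorem RMMrate_eq_zero_of_add_disp_notMem {i : Fin 4} {x : ℤ × ℤ} (hx : x ∈ RMMState N M)
    (h : x + RMMdisp i ∉ RMMState N M) : RMMrate k₁ k₂ k₃ k₄ N M i x = 0 := by
  obtain ⟨x₁, x₂⟩ := x
  simp only [RMMState, Set.mem_ofPred_eq] at hx h
  fin_cases i <;> simp only [RMMdisp, RMMrate, Prod.mk_add_mk] at h ⊢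
  · rcases (by omega : x₁ + x₂ = N ∨ x₁ = M) with hs | rfl
    · have : (x₁ : ℝ) + x₂ = N := by exact_mod_cast hs
      simp [show (N : ℝ) - x₁ - x₂ = 0 by linarith]
    · simp
  · simp [(by omega : x₁ = 0)]
  · simp [(by omega : x₁ = 0)]
  · rcases (by omega : x₂ = 0 ∨ x₁ = M) with rfl | rfl <;> simp

theorem RMMupdate_mem {i : Fin 4} {t : ℝ} (ht : 0 < t) {x : ℤ × ℤ} (hx : x ∈ RMMState N M) :
    RMMupdate k₁ k₂ k₃ k₄ N M i t x ∈ RMMState N M := by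
  unfold RMMupdate
  split_ifs with hfire
  · by_contra h
    rw [RMMrate_eq_zero_of_add_disp_notMem hx h] at hfire
    linarith
  · exact hx

theorem RMMrate_le_of_mem_psiB_add (hk₂ : 0 ≤ k₂) (hk₃ : 0 ≤ k₃) (hk₄ : 0 ≤ k₄) {i : Fin 4}
    {a b : ℤ × ℤ} (ha : a ∈ RMMState N M) (hba : b ∉ psiB a.1 a.2)
    (h : b ∈ psiB (a + RMMdisp i).1 (a + RMMdisp i).2) :
    RMMrate k₁ k₂ k₃ k₄ N M i a ≤ RMMrate k₁ k₂ k₃ k₄ N M i b := by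
  obtain ⟨a₁, a₂⟩ := a
  obtain ⟨b₁, b₂⟩ := b
  simp only [RMMState, psiB, Set.mem_union, Set.mem_ofPred_eq] at ha hba h
  fin_cases i <;> simp only [RMMdisp, RMMrate, Prod.mk_add_mk] at h ⊢
  · omega
  · have : (a₁ : ℝ) ≤ b₁ := by exact_mod_cast (by omega : a₁ ≤ b₁)
    gcongr
  · have : (a₁ : ℝ) ≤ b₁ := by exact_mod_cast (by omega : a₁ ≤ b₁)
    gcongr
  · obtain rfl : a₂ = b₂ := by omega
    have : (b₁ : ℝ) ≤ a₁ := by exact_mod_cast (by omega : b₁ ≤ a₁)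
    have : (0 : ℝ) ≤ a₂ := by exact_mod_cast ha.2.2.1
    gcongr

theorem RMMrate_le_of_add_mem_psiB (hk₁ : 0 ≤ k₁) (hk₃ : 0 ≤ k₃) (hk₄ : 0 ≤ k₄) {i : Fin 4}
    {a b : ℤ × ℤ} (ha : a ∈ RMMState N M) (hba : b ∉ psiB a.1 a.2)
    (h : b + RMMdisp i ∈ psiB a.1 a.2) :
    RMMrate k₁ k₂ k₃ k₄ N M i b ≤ RMMrate k₁ k₂ k₃ k₄ N M i a := by
  obtain ⟨a₁, a₂⟩ := a
  obtain ⟨b₁, b₂⟩ := b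
  simp only [RMMState, psiB, Set.mem_union, Set.mem_ofPred_eq] at ha hba h
  fin_cases i <;> simp only [RMMdisp, RMMrate, Prod.mk_add_mk] at h ⊢
  · have hs : (b₁ : ℝ) + b₂ = a₁ + a₂ := by exact_mod_cast (by omega : b₁ + b₂ = a₁ + a₂)
    have : (a₁ : ℝ) ≤ b₁ := by exact_mod_cast (by omega : a₁ ≤ b₁)
    have : (a₁ : ℝ) + a₂ ≤ N := by exact_mod_cast ha.2.2.2
    rw [sub_sub, hs, ← sub_sub]
    gcongr
    exact mul_nonneg hk₁ (by linarith)
  · omega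
  · have : (b₁ : ℝ) ≤ a₁ := by exact_mod_cast (by omega : b₁ ≤ a₁)
    gcongr
  · obtain rfl : b₁ = a₁ := by omega
    have : (b₂ : ℝ) ≤ a₂ := by exact_mod_cast (by omega : b₂ ≤ a₂)
    have : (b₁ : ℝ) ≤ M := by exact_mod_cast ha.2.1
    gcongr

theorem RMMupdate_notMem_psiB (hk₁ : 0 ≤ k₁) (hk₂ : 0 ≤ k₂) (hk₃ : 0 ≤ k₃) (hk₄ : 0 ≤ k₄)
    (i : Fin 4) (t : ℝ) {a b : ℤ × ℤ} (ha : a ∈ RMMState N M) (hba : b ∉ psiB a.1 a.2) :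
    RMMupdate k₁ k₂ k₃ k₄ N M i t b ∉
      psiB (RMMupdate k₁ k₂ k₃ k₄ N M i t a).1 (RMMupdate k₁ k₂ k₃ k₄ N M i t a).2 :=
  rel_ite_ge_of_le (fun b a => b ∉ psiB a.1 a.2) _ (RMMdisp i) t hba
    ((add_mem_psiB_add_iff a b _).not.2 hba)
    (fun h => RMMrate_le_of_mem_psiB_add hk₂ hk₃ hk₄ ha hba (not_not.1 h))
    (fun h => RMMrate_le_of_add_mem_psiB hk₁ hk₃ hk₄ ha hba (not_not.1 h))

theorem RMMflow_mem {L : List (Fin 4 × ℝ)} (hL : ∀ q ∈ L, 0 < q.2) {x : ℤ × ℤ}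
    (hx : x ∈ RMMState N M) : RMMflow k₁ k₂ k₃ k₄ N M L x ∈ RMMState N M := by
  induction L generalizing x with
  | nil => exact hx
  | cons q L ih =>
    exact ih (fun r hr => hL r (List.mem_cons_of_mem q hr))
      (RMMupdate_mem (hL q List.mem_cons_self) hx)

theorem RMMflow_notMem_psiB (hk₁ : 0 ≤ k₁) (hk₂ : 0 ≤ k₂) (hk₃ : 0 ≤ k₃) (hk₄ : 0 ≤ k₄)
    {L : List (Fin 4 × ℝ)} (hL : ∀ q ∈ L, 0 < q.2) {a b : ℤ × ℤ} (ha : a ∈ RMMState N M)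
    (hba : b ∉ psiB a.1 a.2) :
    RMMflow k₁ k₂ k₃ k₄ N M L b ∉
      psiB (RMMflow k₁ k₂ k₃ k₄ N M L a).1 (RMMflow k₁ k₂ k₃ k₄ N M L a).2 := by
  induction L generalizing a b with
  | nil => exact hba
  | cons q L ih =>
    exact ih (fun r hr => hL r (List.mem_cons_of_mem q hr))
      (RMMupdate_mem (hL q List.mem_cons_self) ha)
      (RMMupdate_notMem_psiB hk₁ hk₂ hk₃ hk₄ q.1 q.2 ha hba)

end RMM

theorem prop41B_general (k₁ k₂ k₃ k₄ : ℝ)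
    (hk₁ : 0 < k₁) (hk₂ : 0 < k₂) (hk₃ : 0 < k₃) (hk₄ : 0 < k₄)
    (N M : ℕ)
    (L : List (Fin 4 × ℝ)) (hL : ∀ q ∈ L, 0 < q.2)
    (xC xP : ℤ) (hB : RMMflow k₁ k₂ k₃ k₄ N M L (0, (N : ℤ)) = (xC, xP))
    (y : ℤ × ℤ) (hy : y ∈ RMMState N M) :
    ¬ ((RMMflow k₁ k₂ k₃ k₄ N M L y).2 > xP) ∧
    ¬ ((RMMflow k₁ k₂ k₃ k₄ N M L y).1 > xC ∧
        (RMMflow k₁ k₂ k₃ k₄ N M L y).2 >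
          -(RMMflow k₁ k₂ k₃ k₄ N M L y).1 + (xC + xP)) := by
  have htop : ((0 : ℤ), (N : ℤ)) ∈ RMMState N M := by
    simp only [RMMState, Set.mem_ofPred_eq]
    omega
  have hy_top : y ∉ psiB 0 N := by
    simp only [RMMState, psiB, Set.mem_union, Set.mem_ofPred_eq] at hy ⊢
    omega
  have h := RMMflow_notMem_psiB hk₁.le hk₂.le hk₃.le hk₄.le hL htop hy_top
  rw [hB] at h
  simp only [psiB, Set.mem_union, Set.mem_ofPred_eq] at h
  omega

/-- Proposition 4.1, Part B: if the trajectory started at `(0,N)` is at `(x_C*, x_P*)` after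
the update steps, then no trajectory started in `S` has `x_P > x_P*`, and none has
`x_C > x_C*` together with `x_P > -x_C + (x_C* + x_P*)`. -/
theorem prop41B (k₁ k₂ k₃ k₄ : ℝ)
    (hk₁ : 0 < k₁) (hk₂ : 0 < k₂) (hk₃ : 0 < k₃) (hk₄ : 0 < k₄)
    (N M : ℕ) (hM : 1 ≤ M) (hMN : M ≤ N)
    (L : List (Fin 4 × ℝ)) (hL : ∀ q ∈ L, 0 < q.2)
    (xC xP : ℤ) (hB : RMMflow k₁ k₂ k₃ k₄ N M L (0, (N : ℤ)) = (xC, xP))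
    (y : ℤ × ℤ) (hy : y ∈ RMMState N M) :
    ¬ ((RMMflow k₁ k₂ k₃ k₄ N M L y).2 > xP) ∧
    ¬ ((RMMflow k₁ k₂ k₃ k₄ N M L y).1 > xC ∧
        (RMMflow k₁ k₂ k₃ k₄ N M L y).2 >
          -(RMMflow k₁ k₂ k₃ k₄ N M L y).1 + (xC + xP)) :=
  prop41B_general k₁ k₂ k₃ k₄ hk₁ hk₂ hk₃ hk₄ N M L hL xC xP hB y hy
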